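/- For every n ≥ 1 and every one-dimensional isotropic subspace w of (ZMod 2)^{2n}, one has |L^n_1| · |{x ∈ L^n_n : w ⊆ x}| = |L^n_n| · (2^n − 1). In particular the number of maximal isotropic subspaces containing w equals |L^n_n|(2^n − 1)/|L^n_1|, independently of w. -/

import Mathlib

open Finset

abbrev F2 := ZMod 2
/-- `F2^{2n}`, split into the first and last `n` coordinates. -/
abbrev PV (n : ℕ) := (Fin n → F2) × (Fin n → F2)

/-- Symplectic product on `F2^{2n}`: zero iff `a₁·b₂ = a₂·b₁`. -/
def symp {n : ℕ} (a b : PV n) : F2 :=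
  (∑ i, a.1 i * b.2 i) + (∑ i, a.2 i * b.1 i)

/-- A subspace is isotropic if the symplectic product vanishes on it. -/
def IsIsotropic {n : ℕ} (S : Submodule F2 (PV n)) : Prop :=
  ∀ x ∈ S, ∀ y ∈ S, symp x y = 0

/-- `Lset n k` = `L^n_k`, the set of `k`-dimensional isotropic subspaces of `F2^{2n}`. -/
def Lset (n k : ℕ) : Set (Submodule F2 (PV n)) :=
  {S | IsIsotropic S ∧ Module.finrank F2 S = k}

/-- Integer lift of a vector over `F2`, with values in `{0,1} ⊆ ℤ`. -/
def liftZ {n : ℕ} (v : Fin n → F2) : Fin n → ℤ := fun i => ((v i).val : ℤ)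

def dotZ {n : ℕ} (a b : Fin n → ℤ) : ℤ := ∑ i, a i * b i

/-- The phase `i^{x̂₁·x̂₂} · i^{ŷ₁·ŷ₂} · i^{−((x+y)^^₁·(x+y)^^₂)} · (−1)^{x̂₂·ŷ₁}`. -/
noncomputable def phase {n : ℕ} (x y : PV n) : ℂ :=
  Complex.I ^ (dotZ (liftZ x.1) (liftZ x.2)) *
  Complex.I ^ (dotZ (liftZ y.1) (liftZ y.2)) *
  Complex.I ^ (-(dotZ (liftZ (x + y).1) (liftZ (x + y).2))) *
  (-1 : ℂ) ^ (dotZ (liftZ x.2) (liftZ y.1))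

/-- `w(x,y) ∈ {0,1} ⊆ F2`: zero iff the phase equals `1`. -/
noncomputable def wght {n : ℕ} (x y : PV n) : F2 :=
  if phase x y = 1 then 0 else 1

/-- An outcome of an isotropic subspace `S` is `f : S → F2` with
`f(x+y) = f(x)+f(y)+w(x,y)`. -/
def IsOutcome {n : ℕ} (S : Submodule F2 (PV n)) (f : S → F2) : Prop :=
  ∀ x y : S, f (x + y) = f x + f y + wght (x : PV n) (y : PV n)

/-- Two outcomes are consistent if they agree on the intersection of their domains. -/
def ConsistentOn {n : ℕ} {S₁ S₂ : Submodule F2 (PV n)} (f₁ : S₁ → F2) (f₂ : S₂ → F2) : Prop :=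
  ∀ v (h1 : v ∈ S₁) (h2 : v ∈ S₂), f₁ ⟨v, h1⟩ = f₂ ⟨v, h2⟩

/-!
The symplectic group of `F2^{2n}` acts transitively on nonzero vectors: given `u, v ≠ 0`, pick `z`
with `⟨u,z⟩ = ⟨v,z⟩ = 1`; the transvections `x ↦ x + ⟨x,a⟩a` along `a = u + z` and `a = z + v`
move `u` to `z` and `z` to `v`. Hence the number of maximal isotropic subspaces containing a line
does not depend on the line. Every line is isotropic and, over `F2`, is spanned by a unique
nonzero vector, so a maximal isotropic subspace contains exactly `2^n - 1` lines. Double counting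
the incidences between lines and maximal isotropic subspaces gives the formula.
-/

namespace LinearMap.BilinForm

variable {V : Type*} [AddCommGroup V] [Module F2 V] {B : LinearMap.BilinForm F2 V}

lemma IsAlt.apply_comm (hB : B.IsAlt) (x y : V) : B y x = B x y := by
  rw [← hB.neg_eq, ZMod.neg_eq_self_mod_two]

def sympTransvection (hB : B.IsAlt) (a : V) : V ≃ₗ[F2] V :=
  LinearEquiv.transvection (f := B.flip a) (v := a) (hB.self_eq_zero a)

lemma sympTransvection_apply (hB : B.IsAlt) (a x : V) :
    sympTransvection hB a x = x + B x a • a :=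
  rfl

lemma apply_sympTransvection (hB : B.IsAlt) (a x y : V) :
    B (sympTransvection hB a x) (sympTransvection hB a y) = B x y := by
  have h2 : (2 : F2) = 0 := rfl
  have hc := hB.apply_comm a y
  simp only [sympTransvection_apply, map_add, map_smul, LinearMap.add_apply,
    LinearMap.smul_apply, smul_eq_mul, hB.self_eq_zero]
  linear_combination (B x a * B a y) * h2 + B x a * hc

lemma sympTransvection_add_apply_self {u z : V} (hB : B.IsAlt) (h : B u z = 1) :
    sympTransvection hB (u + z) u = z := by
  have h2 : (2 : F2) = 0 := rfl
  rw [sympTransvection_apply, map_add, hB.self_eq_zero, h, zero_add, one_smul, ← add_assoc,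
    ← two_smul F2, h2, zero_smul, zero_add]

lemma exists_apply_eq_one (hB : B.SeparatingLeft) {u : V} (hu : u ≠ 0) : ∃ z, B u z = 1 := by
  by_contra! h
  exact hu (hB u fun z => by_contra fun h0 => h z (Fin.eq_one_of_ne_zero _ h0))

lemma exists_apply_eq_one_and_apply_eq_one (hB : B.SeparatingLeft) {u v : V} (hu : u ≠ 0)
    (hv : v ≠ 0) : ∃ z, B u z = 1 ∧ B v z = 1 := by
  obtain ⟨a, ha⟩ := exists_apply_eq_one hB hu
  obtain ⟨c, hc⟩ := exists_apply_eq_one hB hv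
  by_cases hva : B v a = 0
  · by_cases huc : B u c = 0
    · exact ⟨a + c, by rw [map_add, ha, huc, add_zero], by rw [map_add, hva, hc, zero_add]⟩
    · exact ⟨c, Fin.eq_one_of_ne_zero _ huc, hc⟩
  · exact ⟨a, ha, Fin.eq_one_of_ne_zero _ hva⟩

lemma exists_isometry_apply_eq (hB : B.IsAlt) (hB' : B.SeparatingLeft) {u v : V} (hu : u ≠ 0)
    (hv : v ≠ 0) : ∃ g : V ≃ₗ[F2] V, (∀ x y, B (g x) (g y) = B x y) ∧ g u = v := by
  obtain ⟨z, huz, hvz⟩ := exists_apply_eq_one_and_apply_eq_one hB' hu hv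
  refine ⟨(sympTransvection hB (u + z)).trans (sympTransvection hB (z + v)), fun x y => ?_, ?_⟩
  · simp only [LinearEquiv.trans_apply, apply_sympTransvection]
  · rw [LinearEquiv.trans_apply, sympTransvection_add_apply_self hB huz,
      sympTransvection_add_apply_self hB (by rwa [hB.apply_comm])]

end LinearMap.BilinForm

def sympForm (n : ℕ) : LinearMap.BilinForm F2 (PV n) :=
  LinearMap.mk₂ F2 symp
    (fun a b c => by simp [symp, add_mul, sum_add_distrib, add_add_add_comm])
    (fun r a b => by simp [symp, mul_assoc, ← mul_sum, mul_add])
    (fun a b c => by simp [symp, mul_add, sum_add_distrib, add_add_add_comm])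
    (fun r a b => by simp [symp, mul_left_comm _ r, ← mul_sum, mul_add])

@[simp]
lemma sympForm_apply {n : ℕ} (a b : PV n) : sympForm n a b = symp a b :=
  rfl

lemma sympForm_isAlt (n : ℕ) : (sympForm n).IsAlt := fun a => by
  have h2 : (2 : F2) = 0 := rfl
  simp only [sympForm_apply, symp, mul_comm (a.2 _), ← two_mul, h2, zero_mul]

lemma sympForm_separatingLeft (n : ℕ) : (sympForm n).SeparatingLeft := fun u hu => by
  ext i
  · simpa [symp, Pi.single_apply] using hu (0, Pi.single i 1)
  · simpa [symp, Pi.single_apply] using hu (Pi.single i 1, 0)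

lemma Submodule.exists_eq_span_singleton_of_finrank_eq_one {K V : Type*} [DivisionRing K]
    [AddCommGroup V] [Module K V] {w : Submodule K V} (hw : Module.finrank K w = 1) :
    ∃ u, u ≠ 0 ∧ w = K ∙ u :=
  ⟨_, Projectivization.rep_nonzero (.mk'' w hw), by
    rw [← Projectivization.submodule_eq, Projectivization.submodule_mk'']⟩

lemma isIsotropic_span_singleton {n : ℕ} (u : PV n) : IsIsotropic (F2 ∙ u) := by
  simp only [IsIsotropic, Submodule.mem_span_singleton]
  rintro _ ⟨c, rfl⟩ _ ⟨d, rfl⟩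
  simp [← sympForm_apply, (sympForm_isAlt n).self_eq_zero]

lemma mem_Lset_one_iff {n : ℕ} {w : Submodule F2 (PV n)} :
    w ∈ Lset n 1 ↔ Module.finrank F2 w = 1 := by
  refine ⟨And.right, fun hw => ⟨?_, hw⟩⟩
  obtain ⟨u, -, rfl⟩ := Submodule.exists_eq_span_singleton_of_finrank_eq_one hw
  exact isIsotropic_span_singleton u

lemma map_mem_Lset {n k : ℕ} {g : PV n ≃ₗ[F2] PV n} (hg : ∀ x y, symp (g x) (g y) = symp x y)
    {S : Submodule F2 (PV n)} (hS : S ∈ Lset n k) : S.map (g : PV n →ₗ[F2] PV n) ∈ Lset n k := by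
  refine ⟨?_, by rw [LinearEquiv.finrank_map_eq, hS.2]⟩
  rintro _ ⟨x, hx, rfl⟩ _ ⟨y, hy, rfl⟩
  exact (hg x y).trans (hS.1 x hx y hy)

lemma card_maximal_above_le {n : ℕ} {w w' : Submodule F2 (PV n)} (hw : w ∈ Lset n 1)
    (hw' : w' ∈ Lset n 1) :
    Nat.card {x : Submodule F2 (PV n) | x ∈ Lset n n ∧ w ≤ x} ≤
      Nat.card {x : Submodule F2 (PV n) | x ∈ Lset n n ∧ w' ≤ x} := by
  obtain ⟨u, hu, rfl⟩ := Submodule.exists_eq_span_singleton_of_finrank_eq_one hw.2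
  obtain ⟨u', hu', rfl⟩ := Submodule.exists_eq_span_singleton_of_finrank_eq_one hw'.2
  obtain ⟨g, hg, hgu⟩ := LinearMap.BilinForm.exists_isometry_apply_eq (sympForm_isAlt n)
    (sympForm_separatingLeft n) hu hu'
  have hmap (x : Submodule F2 (PV n)) (hx : F2 ∙ u ≤ x) :
      F2 ∙ u' ≤ x.map (g : PV n →ₗ[F2] PV n) := by
    rw [Submodule.span_singleton_le_iff_mem, ← hgu]
    exact Submodule.mem_map_of_mem (hx (Submodule.mem_span_singleton_self u))
  refine Nat.card_le_card_of_injective (fun x => ⟨_, map_mem_Lset hg x.2.1, hmap _ x.2.2⟩) ?_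
  intro x y hxy
  exact Subtype.ext (Submodule.map_injective_of_injective g.injective (congrArg Subtype.val hxy))

lemma Submodule.natCard_lines_le_eq_card_projectivization {K V : Type*} [Field K]
    [AddCommGroup V] [Module K V] (x : Submodule K V) :
    Nat.card {w : Submodule K V | Module.finrank K w = 1 ∧ w ≤ x} =
      Nat.card (Projectivization K x) := by
  have himage : {w : Submodule K V | Module.finrank K w = 1 ∧ w ≤ x} =
      Submodule.map x.subtype '' {H : Submodule K x | Module.finrank K H = 1} := by
    ext w
    constructor
    · rintro ⟨hw, hwx⟩
      refine ⟨w.comap x.subtype, ?_, by rw [Submodule.map_comap_subtype, inf_eq_right.mpr hwx]⟩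
      rwa [Set.mem_ofPred_eq, ← Submodule.finrank_map_subtype_eq, Submodule.map_comap_subtype,
        inf_eq_right.mpr hwx]
    · rintro ⟨H, hH, rfl⟩
      exact ⟨(Submodule.finrank_map_subtype_eq x H).trans hH, Submodule.map_subtype_le x H⟩
  rw [himage,
    Nat.card_image_of_injective (Submodule.map_injective_of_injective x.injective_subtype)]
  exact Nat.card_congr (Projectivization.equivSubmodule K x).symm

lemma card_lines_below {n : ℕ} (x : Submodule F2 (PV n)) :
    Nat.card {w : Submodule F2 (PV n) | w ∈ Lset n 1 ∧ w ≤ x} = 2 ^ Module.finrank F2 x - 1 := by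
  simp_rw [mem_Lset_one_iff]
  rw [Submodule.natCard_lines_le_eq_card_projectivization, Projectivization.card'',
    Module.natCard_eq_pow_finrank (K := F2), Nat.card_zmod, Nat.div_one]

lemma Set.natCard_mul_eq_natCard_mul {α β : Type*} [Finite α] [Finite β] {s : Set α}
    {t : Set β} (r : α → β → Prop) {m n : ℕ}
    (hm : ∀ a ∈ s, Nat.card {b | b ∈ t ∧ r a b} = m)
    (hn : ∀ b ∈ t, Nat.card {a | a ∈ s ∧ r a b} = n) :
    Nat.card s * m = Nat.card t * n := by
  classical
  have := Fintype.ofFinite α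
  have := Fintype.ofFinite β
  simp only [Nat.card_eq_card_toFinset] at hm hn ⊢
  refine Finset.card_mul_eq_card_mul r (fun a ha => ?_) (fun b hb => ?_)
  · rw [← hm a (Set.mem_toFinset.mp ha)]
    congr 1
    ext b
    simp [Finset.mem_bipartiteAbove]
  · rw [← hn b (Set.mem_toFinset.mp hb)]
    congr 1
    ext a
    simp [Finset.mem_bipartiteBelow]

/-- Double counting: `|L^n_1| · |{x ∈ L^n_n : w ⊆ x}| = |L^n_n| · (2^n − 1)`, for every
one-dimensional isotropic subspace `w`; in particular the number of maximal isotropic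
subspaces containing `w` does not depend on `w`. -/
theorem count_maximal_above_line :
    ∀ n : ℕ, 1 ≤ n → ∀ w ∈ Lset n 1,
      Nat.card (Lset n 1) * Nat.card {x : Submodule F2 (PV n) | x ∈ Lset n n ∧ w ≤ x} =
        Nat.card (Lset n n) * (2 ^ n - 1) := by
  intro n _ w hw
  refine Set.natCard_mul_eq_natCard_mul (· ≤ ·) (fun w' hw' => ?_) (fun x hx => ?_)
  · exact (card_maximal_above_le hw' hw).antisymm (card_maximal_above_le hw hw')
  · rw [card_lines_below, hx.2]
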